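/- Let n be a positive integer, B a symmetric n×n real matrix, g ∈ ℝⁿ, and δ > 0, and let p* be a global minimizer of q(p) = gᵀp + (1/2)pᵀBp over {p ∈ ℝⁿ : ‖p‖₂ ≤ δ}. If σ₁ ≥ 0 and σ₂ ≥ 0 both satisfy: B + σᵢI is positive semidefinite, (B + σᵢI)p* = -g, and σᵢ(δ - ‖p*‖₂) = 0 (for i = 1, 2), then σ₁ = σ₂; i.e., the Lagrange multiplier σ* in the Moré–Sorensen optimality conditions is unique. -/

import Mathlib

open Matrix

/-! Subtracting the two stationarity equations `(B + σᵢ I) p⋆ = -g` leaves `(σ₁ - σ₂) p⋆ = 0`,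
so the multipliers agree as soon as `p⋆ ≠ 0`. If `p⋆ = 0`, it lies strictly inside the ball,
and complementarity forces `σ₁ = σ₂ = 0`. -/

theorem Matrix.add_smul_one_mulVec {ι R : Type*} [Fintype ι] [DecidableEq ι] [CommRing R]
    (A : Matrix ι ι R) (σ : R) (v : ι → R) : (A + σ • 1) *ᵥ v = A *ᵥ v + σ • v := by
  rw [add_mulVec, smul_mulVec, one_mulVec]

theorem Matrix.eq_of_add_smul_one_mulVec_eq {ι R : Type*} [Fintype ι] [DecidableEq ι]
    [CommRing R] [IsDomain R] {A : Matrix ι ι R} {σ₁ σ₂ : R} {v : ι → R} (hv : v ≠ 0)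
    (h : (A + σ₁ • 1) *ᵥ v = (A + σ₂ • 1) *ᵥ v) : σ₁ = σ₂ := by
  rw [add_smul_one_mulVec, add_smul_one_mulVec] at h
  exact smul_left_injective R hv (add_left_cancel h)

theorem eq_zero_of_mul_sub_eq_zero {σ δ r : ℝ} (hr : r < δ) (h : σ * (δ - r) = 0) : σ = 0 :=
  (mul_eq_zero.mp h).resolve_right (sub_ne_zero.mpr hr.ne')

theorem mss_stmt2 (n : ℕ)
    (B : Matrix (Fin n) (Fin n) ℝ)
    (g : EuclideanSpace ℝ (Fin n)) (δ : ℝ) (hδ : 0 < δ)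
    (pstar : EuclideanSpace ℝ (Fin n))
    (σ₁ σ₂ : ℝ)
    (heq₁ : (B + σ₁ • 1).mulVec pstar = -g)
    (hcomp₁ : σ₁ * (δ - ‖pstar‖) = 0)
    (heq₂ : (B + σ₂ • 1).mulVec pstar = -g)
    (hcomp₂ : σ₂ * (δ - ‖pstar‖) = 0) :
    σ₁ = σ₂ := by
  by_cases hp : pstar = 0
  · have hinterior : ‖pstar‖ < δ := by simpa [hp] using hδ
    rw [eq_zero_of_mul_sub_eq_zero hinterior hcomp₁, eq_zero_of_mul_sub_eq_zero hinterior hcomp₂]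
  · exact eq_of_add_smul_one_mulVec_eq (WithLp.ofLp_eq_zero 2 |>.not.mpr hp) (heq₁.trans heq₂.symm)
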